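/- For every integer k ≥ 1, the mean of the k-th extreme Gumbel law satisfies ∫_{−∞}^{∞} y · (1/(k−1)!) e^{−ky} e^{−e^{−y}} dy = γ − Σ_{i=1}^{k-1} 1/i, where γ is the Euler–Mascheroni constant. -/

import Mathlib

/-!
Substituting `t = e^{-y}` turns the mean into `-(1/(k-1)!) ∫₀^∞ t^{k-1} log t e^{-t} dt`.
Differentiating Euler's integral under the integral sign, this integral is `Γ'(k)`, and
`Γ'(k) = (k-1)! (H_{k-1} - γ)`.
-/

open MeasureTheory Filter Real

theorem Complex.deriv_Gamma_eq_integral {s : ℂ} (hs : 0 < s.re) :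
    deriv Gamma s = ∫ t : ℝ in Set.Ioi 0, (t : ℂ) ^ (s - 1) * (Real.log t * Real.exp (-t)) := by
  have hGamma : Gamma =ᶠ[nhds s] GammaIntegral := by
    filter_upwards [(isOpen_lt continuous_const continuous_re).mem_nhds hs]
      with z hz using Gamma_eq_integral hz
  exact ((hasDerivAt_GammaIntegral hs).congr_of_eventuallyEq hGamma).deriv

theorem integral_pow_mul_log_mul_exp_neg (n : ℕ) :
    ∫ t in Set.Ioi (0 : ℝ), t ^ n * (log t * exp (-t)) =
      n.factorial * (harmonic n - eulerMascheroniConstant) := by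
  have h := Complex.deriv_Gamma_eq_integral (s := n + 1) (by simp; positivity)
  rw [Complex.deriv_Gamma_nat, add_sub_cancel_right] at h
  apply Complex.ofReal_injective
  rw [← integral_complex_ofReal]
  push_cast
  rw [sub_eq_neg_add, h]
  refine setIntegral_congr_fun measurableSet_Ioi fun t _ => ?_
  simp only [Complex.cpow_natCast, Complex.ofReal_exp, Complex.ofReal_neg]

theorem integral_exp_neg_smul_comp_exp_neg {E : Type*} [NormedAddCommGroup E] [NormedSpace ℝ E]
    (g : ℝ → E) : ∫ x, exp (-x) • g (exp (-x)) = ∫ t in Set.Ioi 0, g t := by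
  rw [integral_neg_eq_self (fun x => exp x • g (exp x)), ← range_exp, ← Set.image_univ,
    integral_image_eq_integral_abs_deriv_smul MeasurableSet.univ
      (fun x _ => (hasDerivAt_exp x).hasDerivWithinAt) exp_injective.injOn,
    setIntegral_univ]
  simp only [abs_of_pos (exp_pos _)]

/-- the mean of the k-th extreme Gumbel law is `γ - Σ_{i=1}^{k-1} 1/i`. -/
theorem mean_kth_extreme_gumbel (k : ℕ) (hk : 1 ≤ k) :
    ∫ y : ℝ, y * ((1 / (k - 1).factorial : ℝ) * Real.exp (-(k * y)) * Real.exp (-Real.exp (-y))) =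
      eulerMascheroniConstant - ∑ i ∈ Finset.Icc 1 (k - 1), (1 : ℝ) / i := by
  obtain ⟨n, rfl⟩ := Nat.exists_eq_add_of_le' hk
  rw [Nat.add_sub_cancel]
  have hsubst (y : ℝ) :
      y * ((1 / n.factorial : ℝ) * exp (-(↑(n + 1) * y)) * exp (-exp (-y))) =
        -(1 / n.factorial : ℝ) *
          (exp (-y) • (exp (-y) ^ n * (log (exp (-y)) * exp (-exp (-y))))) := by
    have hexp : exp (-(↑(n + 1) * y)) = exp (-y) * exp (-y) ^ n := by
      rw [← exp_nat_mul, ← exp_add]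
      push_cast
      ring_nf
    rw [hexp, smul_eq_mul, log_exp]
    ring
  rw [integral_congr_ae (.of_forall hsubst), integral_const_mul,
    integral_exp_neg_smul_comp_exp_neg (fun t => t ^ n * (log t * exp (-t))),
    integral_pow_mul_log_mul_exp_neg, harmonic_eq_sum_Icc]
  field_simp
  push_cast
  simp only [one_div, neg_sub]
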